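/- For any nonzero vectors u, v in ℝ^n, the following two-sided bound holds: ⟨u, v/‖v‖⟩ ≤ ‖u + v‖ - ‖v‖ ≤ ⟨u, v/‖v‖⟩ + (1/2)·‖u‖³/√(‖u‖²‖v‖² - ⟨u,v⟩²), where the upper bound is interpreted as +∞ (or the claim restricted to the case) when u and v are linearly dependent. -/

import Mathlib

open MeasureTheory Matrix Real
notation "⟪" x ", " y "⟫_ℝ" => @inner ℝ _ _ x y

noncomputable def frobNorm {d : ℕ} (A : Matrix (Fin d) (Fin d) ℝ) : ℝ :=
  Real.sqrt (∑ i, ∑ j, A i j ^ 2)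

noncomputable def nuclearNorm {d : ℕ} (A : Matrix (Fin d) (Fin d) ℝ) : ℝ :=
  ∑ i, Real.sqrt ((show (Aᵀ * A).IsHermitian by
    simpa using Matrix.isHermitian_conjTranspose_mul_self A).eigenvalues i)

/-- `μ` is the uniform (rotation-invariant) probability distribution on the unit
sphere `S^{d-1} ⊂ ℝ^d`. -/
def IsUniformOnSphere {d : ℕ} (μ : Measure (EuclideanSpace ℝ (Fin d))) : Prop :=
  IsProbabilityMeasure μ ∧ (∀ᵐ x ∂μ, ‖x‖ = 1) ∧
  ∀ Q : Matrix (Fin d) (Fin d) ℝ, Qᵀ * Q = 1 →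
    Measure.map (fun x => Matrix.toEuclideanLin Q x) μ = μ

/-- The Beta function. -/
noncomputable def Beta (m n : ℝ) : ℝ := Real.Gamma m * Real.Gamma n / Real.Gamma (m + n)

noncomputable def ptilde (d : ℕ) : ℝ :=
  (1 + Beta ((d : ℝ) - 1) (1/2) / Beta (((d : ℝ) - 1)/2) (1/2))⁻¹

def A2 : Matrix (Fin 2) (Fin 2) ℝ := !![0, -1; 1, 0]

noncomputable def rot2 (θ : ℝ) : Matrix (Fin 2) (Fin 2) ℝ :=
  !![Real.cos θ, -Real.sin θ; Real.sin θ, Real.cos θ]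


/-! The lower bound is Cauchy–Schwarz for `⟪u + v, v⟫`. For the upper bound, AM-GM
`2 ‖u + v‖ ‖v‖ ≤ ‖u + v‖² + ‖v‖²` already gives the sharper
`‖u + v‖ - ‖v‖ ≤ ⟪u, v / ‖v‖⟫ + ‖u‖² / (2 ‖v‖)`, and `‖u‖² / (2 ‖v‖) ≤ ‖u‖³ / (2 √D)` because the
Gram determinant `D = ‖u‖²‖v‖² - ⟪u, v⟫²` is positive and at most `(‖u‖ ‖v‖)²`. -/

section RealInnerProductSpace

variable {F : Type*} [NormedAddCommGroup F] [InnerProductSpace ℝ F]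

theorem inner_inv_norm_smul_le_norm_add_sub_norm (u v : F) :
    ⟪u, ‖v‖⁻¹ • v⟫_ℝ ≤ ‖u + v‖ - ‖v‖ := by
  have h_cs : ⟪u + v, v⟫_ℝ ≤ ‖u + v‖ * ‖v‖ := real_inner_le_norm _ _
  rw [inner_add_left, real_inner_self_eq_norm_sq] at h_cs
  rw [real_inner_smul_right, le_sub_iff_add_le]
  rcases (norm_nonneg v).eq_or_lt with hv | hv
  · simp [← hv]
  · calc ‖v‖⁻¹ * ⟪u, v⟫_ℝ + ‖v‖ = (⟪u, v⟫_ℝ + ‖v‖ ^ 2) / ‖v‖ := by field_simp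
      _ ≤ ‖u + v‖ := (div_le_iff₀ hv).mpr h_cs

theorem norm_add_sub_norm_le_inner_inv_norm_smul_add (u : F) {v : F} (hv : v ≠ 0) :
    ‖u + v‖ - ‖v‖ ≤ ⟪u, ‖v‖⁻¹ • v⟫_ℝ + ‖u‖ ^ 2 / (2 * ‖v‖) := by
  have hv_pos : 0 < ‖v‖ := norm_pos_iff.mpr hv
  have h_amgm : ‖u + v‖ ≤ (‖u + v‖ ^ 2 + ‖v‖ ^ 2) / (2 * ‖v‖) := by
    rw [le_div_iff₀ (by positivity)]
    linarith [two_mul_le_add_sq ‖u + v‖ ‖v‖]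
  rw [norm_add_sq_real] at h_amgm
  rw [real_inner_smul_right, sub_le_iff_le_add]
  calc ‖u + v‖ ≤ (‖u‖ ^ 2 + 2 * ⟪u, v⟫_ℝ + ‖v‖ ^ 2 + ‖v‖ ^ 2) / (2 * ‖v‖) := h_amgm
    _ = ‖v‖⁻¹ * ⟪u, v⟫_ℝ + ‖u‖ ^ 2 / (2 * ‖v‖) + ‖v‖ := by field_simp; ring

theorem sq_inner_lt_norm_sq_mul_norm_sq {u v : F} (h : LinearIndependent ℝ ![u, v]) :
    ⟪u, v⟫_ℝ ^ 2 < ‖u‖ ^ 2 * ‖v‖ ^ 2 := by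
  have hu : u ≠ 0 := by simpa using h.ne_zero 0
  have hv : v ≠ 0 := by simpa using h.ne_zero 1
  have h_ne : |⟪u, v⟫_ℝ| ≠ ‖u‖ * ‖v‖ := by
    rw [← Real.norm_eq_abs, Ne, norm_inner_eq_norm_iff hu hv]
    rintro ⟨r, -, rfl⟩
    exact (LinearIndependent.pair_iff' hu).mp h r rfl
  rw [← mul_pow, sq_lt_sq, abs_of_nonneg (by positivity : 0 ≤ ‖u‖ * ‖v‖)]
  exact (abs_real_inner_le_norm u v).lt_of_ne h_ne

end RealInnerProductSpace

theorem stmt0 {n : ℕ} (u v : EuclideanSpace ℝ (Fin n)) (hu : u ≠ 0) (hv : v ≠ 0)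
    (hind : LinearIndependent ℝ ![u, v]) :
    ⟪u, ‖v‖⁻¹ • v⟫_ℝ ≤ ‖u + v‖ - ‖v‖ ∧
    ‖u + v‖ - ‖v‖ ≤ ⟪u, ‖v‖⁻¹ • v⟫_ℝ
      + (1/2) * ‖u‖^3 / Real.sqrt (‖u‖^2 * ‖v‖^2 - ⟪u, v⟫_ℝ^2) := by
  refine ⟨inner_inv_norm_smul_le_norm_add_sub_norm u v,
    (norm_add_sub_norm_le_inner_inv_norm_smul_add u hv).trans ?_⟩
  have h_gram := sq_inner_lt_norm_sq_mul_norm_sq hind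
  have h_sqrt_pos : 0 < √(‖u‖ ^ 2 * ‖v‖ ^ 2 - ⟪u, v⟫_ℝ ^ 2) := Real.sqrt_pos.mpr (by linarith)
  have h_sqrt_le : √(‖u‖ ^ 2 * ‖v‖ ^ 2 - ⟪u, v⟫_ℝ ^ 2) ≤ ‖u‖ * ‖v‖ :=
    Real.sqrt_le_iff.mpr ⟨by positivity, by nlinarith [sq_nonneg ⟪u, v⟫_ℝ]⟩
  gcongr _ + ?_
  calc ‖u‖ ^ 2 / (2 * ‖v‖) = 1 / 2 * ‖u‖ ^ 3 / (‖u‖ * ‖v‖) := by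
        field_simp [norm_ne_zero_iff.mpr hu]
    _ ≤ 1 / 2 * ‖u‖ ^ 3 / √(‖u‖ ^ 2 * ‖v‖ ^ 2 - ⟪u, v⟫_ℝ ^ 2) := by gcongr
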